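/- arXiv:2103.16428 — 5 statements merged into one kernel-verified Lean document; each statement's English description precedes it below -/
import Mathlib

section
/- For 1 < γ < 3/2, the point with S = 0, Y₁ = 2√((3-2γ)(γ-1))/(2-γ), Y₂ = 2(4-3γ)Y₁ is an equilibrium point of the system dY₁/dχ = (4(γ-1)/(2-γ))(1-S²)[4γ(3-2γ) - Y₁L] + 4(10-7γ)(γ-1)(S² - Y₁²) - Y₂², dY₂/dχ = (4(γ-1)/(2-γ))(1-S²)[4(3-2γ)(12γ-4-7γ²) - Y₂L] + 4(γ-1)(2-γ)Y₁Y₂ + (6-5γ)[16(γ-1)(3-2γ)(S² - Y₁²) - Y₂²], dS/dχ = -(4(γ-1)/(2-γ))S(1-S²)L, and the scaled energy density Y₄ = (3/(16(γ-1)))[16(3-2γ)(γ-1)(1-Y₁²) - Y₂²] vanishes there. -/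
noncomputable def L (γ Y₁ Y₂ : ℝ) : ℝ := (-20 + 36*γ - 15*γ^2) * Y₁ + (4 - 3*γ) * Y₂

noncomputable def F₁ (γ Y₁ Y₂ S : ℝ) : ℝ :=
  (4*(γ-1)/(2-γ)) * (1 - S^2) * (4*γ*(3-2*γ) - Y₁ * L γ Y₁ Y₂)
    + 4*(10-7*γ)*(γ-1) * (S^2 - Y₁^2) - Y₂^2

noncomputable def F₂ (γ Y₁ Y₂ S : ℝ) : ℝ :=
  (4*(γ-1)/(2-γ)) * (1 - S^2) * (4*(3-2*γ)*(12*γ-4-7*γ^2) - Y₂ * L γ Y₁ Y₂)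
    + 4*(γ-1)*(2-γ)*Y₁*Y₂
    + (6-5*γ) * (16*(γ-1)*(3-2*γ)*(S^2 - Y₁^2) - Y₂^2)

noncomputable def F₃ (γ Y₁ Y₂ S : ℝ) : ℝ :=
  -(4*(γ-1)/(2-γ)) * S * (1 - S^2) * L γ Y₁ Y₂

/-!
On the invariant set `S = 0`, along the line `Y₂ = 2(4-3γ)Y₁`, each of `F₁`, `F₂` and the
energy bracket `16(3-2γ)(γ-1)(1-Y₁²) - Y₂²` is a polynomial multiple of the quadratic
`(2-γ)²Y₁² - 4(3-2γ)(γ-1)`, whose positive root is the given `Y₁`. `F₃` carries a factor `S`.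
-/

section OnQuadric

variable {γ Y₁ : ℝ}

theorem F₁_eq_zero_of_sq_eq (hγ : γ ≠ 2) (h : (2-γ)^2 * Y₁^2 = 4*(3-2*γ)*(γ-1)) :
    F₁ γ Y₁ (2*(4-3*γ)*Y₁) 0 = 0 := by
  have : 2 - γ ≠ 0 := sub_ne_zero.mpr hγ.symm
  unfold F₁ L
  field_simp
  linear_combination (-4*γ) * h

theorem F₂_eq_zero_of_sq_eq (hγ : γ ≠ 2) (h : (2-γ)^2 * Y₁^2 = 4*(3-2*γ)*(γ-1)) :
    F₂ γ Y₁ (2*(4-3*γ)*Y₁) 0 = 0 := by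
  have : 2 - γ ≠ 0 := sub_ne_zero.mpr hγ.symm
  unfold F₂ L
  field_simp
  linear_combination (28*γ^2-48*γ+16) * h

-- `16(3-2γ)(γ-1) + 4(4-3γ)² = 4(2-γ)²`
theorem energy_bracket_eq_zero_of_sq_eq (h : (2-γ)^2 * Y₁^2 = 4*(3-2*γ)*(γ-1)) :
    16*(3-2*γ)*(γ-1)*(1 - Y₁^2) - (2*(4-3*γ)*Y₁)^2 = 0 := by
  linear_combination (-4) * h

end OnQuadric

theorem INF_equilibrium (γ : ℝ) (h1 : 1 < γ) (h2 : γ < 3/2)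
    (Y₁ Y₂ : ℝ)
    (hY₁ : Y₁ = 2 * Real.sqrt ((3-2*γ)*(γ-1)) / (2-γ))
    (hY₂ : Y₂ = 2*(4-3*γ)*Y₁) :
    F₁ γ Y₁ Y₂ 0 = 0 ∧ F₂ γ Y₁ Y₂ 0 = 0 ∧ F₃ γ Y₁ Y₂ 0 = 0 ∧
      (3/(16*(γ-1))) * (16*(3-2*γ)*(γ-1)*(1 - Y₁^2) - Y₂^2) = 0 := by
  have hγ : γ ≠ 2 := by linarith
  have hsq : (2-γ)^2 * Y₁^2 = 4*(3-2*γ)*(γ-1) := by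
    have : 2 - γ ≠ 0 := by linarith
    have hnn : 0 ≤ (3-2*γ)*(γ-1) := by nlinarith
    rw [hY₁, div_pow, mul_pow, Real.sq_sqrt hnn]
    field_simp
    ring
  subst hY₂
  refine ⟨F₁_eq_zero_of_sq_eq hγ hsq, F₂_eq_zero_of_sq_eq hγ hsq, by simp [F₃], ?_⟩
  rw [energy_bracket_eq_zero_of_sq_eq hsq, mul_zero]
end

section
/- Let 1 < γ < 3/2 and suppose (Y₁(χ), Y₂(χ), S(χ)) solves the ODE system, with Y₄ = (3/(16(γ-1)))[16(3-2γ)(γ-1)(1-Y₁²) - Y₂²] satisfying dY₄/dχ = 2[(5γ-6)Y₂ + 4(γ-1)(7γ-10)Y₁ - (4(γ-1)/(2-γ))(1-S²)L]Y₄, and Y₄ > 0, 0 < S < 1. Then the function G = Y₄^{(81/40)Q₂(γ)} · (1-S²)^{(81/40)(2-γ)(10-7γ)} / S^{(81/5)γ(3-2γ)} satisfies dG/dχ = -(81/20)(10-9γ)(2-γ)² Y₂ G along the solution. -/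
noncomputable def Y₄fun (γ : ℝ) (Y₁ Y₂ : ℝ) : ℝ :=
  (3/(16*(γ-1))) * (16*(3-2*γ)*(γ-1)*(1 - Y₁^2) - Y₂^2)

/-! Along the flow, `Y₄`, `1 - S²` and `S` each have a logarithmic derivative that is linear
in `(Y₁, Y₂)` with a coefficient depending on `S`. The exponents of `G` are chosen so that the
combination of these logarithmic derivatives loses its dependence on `S` and on `Y₁`, leaving
a constant multiple of `Y₂`. -/

theorem HasDerivAt.rpow_const_of_logDeriv {f : ℝ → ℝ} {a x : ℝ} (p : ℝ)
    (hf : HasDerivAt f (a * f x) x) (hx : f x ≠ 0) :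
    HasDerivAt (fun y => f y ^ p) (p * a * f x ^ p) x := by
  convert hf.rpow_const (p := p) (Or.inl hx) using 1
  rw [Real.rpow_sub_one hx]
  field_simp

theorem HasDerivAt.mul_of_logDeriv {f g : ℝ → ℝ} {a b x : ℝ}
    (hf : HasDerivAt f (a * f x) x) (hg : HasDerivAt g (b * g x) x) :
    HasDerivAt (fun y => f y * g y) ((a + b) * (f x * g x)) x :=
  (hf.mul hg).congr_deriv (by ring)

theorem HasDerivAt.div_of_logDeriv {f g : ℝ → ℝ} {a b x : ℝ}
    (hf : HasDerivAt f (a * f x) x) (hg : HasDerivAt g (b * g x) x) (hx : g x ≠ 0) :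
    HasDerivAt (fun y => f y / g y) ((a - b) * (f x / g x)) x :=
  (hf.div hg hx).congr_deriv (by field_simp)

theorem HasDerivAt.rpow_mul_rpow_div_rpow_of_logDeriv {f g h : ℝ → ℝ} {a b c x : ℝ}
    (p q r : ℝ) (hf : HasDerivAt f (a * f x) x) (hg : HasDerivAt g (b * g x) x)
    (hh : HasDerivAt h (c * h x) x) (hfx : f x ≠ 0) (hgx : g x ≠ 0) (hhx : 0 < h x) :
    HasDerivAt (fun y => f y ^ p * g y ^ q / h y ^ r)
      ((p * a + q * b - r * c) * (f x ^ p * g x ^ q / h x ^ r)) x := by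
  have hfg := (hf.rpow_const_of_logDeriv p hfx).mul_of_logDeriv
    (hg.rpow_const_of_logDeriv q hgx)
  have hhr := hh.rpow_const_of_logDeriv r hhx.ne'
  exact hfg.div_of_logDeriv hhr (Real.rpow_pos_of_pos hhx r).ne'

theorem HasDerivAt.one_sub_sq_of_logDeriv {S : ℝ → ℝ} {c x : ℝ}
    (hS : HasDerivAt S (c * (1 - S x ^ 2) * S x) x) :
    HasDerivAt (fun y => 1 - S y ^ 2) (-2 * c * S x ^ 2 * (1 - S x ^ 2)) x :=
  ((hS.pow 2).const_sub 1).congr_deriv (by push_cast; ring)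

theorem G_logDeriv_eq (γ Y₁ Y₂ S : ℝ) (hγ : γ ≠ 2) :
    (81/40) * (-15*γ^2 + 36*γ - 20)
        * (2 * ((5*γ-6) * Y₂ + 4*(γ-1)*(7*γ-10) * Y₁ - (4*(γ-1)/(2-γ)) * (1 - S^2) * L γ Y₁ Y₂))
      + (81/40) * (2-γ) * (10-7*γ) * (-2 * (-(4*(γ-1)/(2-γ)) * L γ Y₁ Y₂) * S^2)
      - (81/5) * γ * (3-2*γ) * (-(4*(γ-1)/(2-γ)) * L γ Y₁ Y₂ * (1 - S^2))
      = -(81/20) * (10-9*γ) * (2-γ)^2 * Y₂ := by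
  have : (2:ℝ) - γ ≠ 0 := sub_ne_zero.mpr (Ne.symm hγ)
  unfold L
  field_simp
  ring

theorem G_monotone_general (γ : ℝ) (h2 : γ < 3/2)
    (Y₁ Y₂ S : ℝ → ℝ)
    (hS : ∀ χ, HasDerivAt S (F₃ γ (Y₁ χ) (Y₂ χ) (S χ)) χ)
    (hY₄' : ∀ χ, HasDerivAt (fun χ => Y₄fun γ (Y₁ χ) (Y₂ χ))
      (2 * ((5*γ-6) * Y₂ χ + 4*(γ-1)*(7*γ-10) * Y₁ χ
        - (4*(γ-1)/(2-γ)) * (1 - (S χ)^2) * L γ (Y₁ χ) (Y₂ χ))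
        * Y₄fun γ (Y₁ χ) (Y₂ χ)) χ)
    (hY₄pos : ∀ χ, 0 < Y₄fun γ (Y₁ χ) (Y₂ χ))
    (hSrange : ∀ χ, 0 < S χ ∧ S χ < 1) :
    ∀ χ, HasDerivAt
      (fun χ => (Y₄fun γ (Y₁ χ) (Y₂ χ)) ^ ((81/40) * (-15*γ^2 + 36*γ - 20) : ℝ)
        * (1 - (S χ)^2) ^ ((81/40) * (2-γ) * (10-7*γ) : ℝ)
        / (S χ) ^ ((81/5) * γ * (3-2*γ) : ℝ))
      (-(81/20) * (10-9*γ) * (2-γ)^2 * Y₂ χ *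
        ((Y₄fun γ (Y₁ χ) (Y₂ χ)) ^ ((81/40) * (-15*γ^2 + 36*γ - 20) : ℝ)
          * (1 - (S χ)^2) ^ ((81/40) * (2-γ) * (10-7*γ) : ℝ)
          / (S χ) ^ ((81/5) * γ * (3-2*γ) : ℝ))) χ := by
  intro χ
  obtain ⟨hS_pos, hS_lt_one⟩ := hSrange χ
  have hS_logDeriv : HasDerivAt S
      (-(4*(γ-1)/(2-γ)) * L γ (Y₁ χ) (Y₂ χ) * (1 - S χ ^ 2) * S χ) χ :=
    (hS χ).congr_deriv (by unfold F₃; ring)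
  rw [← G_logDeriv_eq γ (Y₁ χ) (Y₂ χ) (S χ) (by linarith)]
  have h_one_sub_sq_pos : 0 < 1 - S χ ^ 2 := by nlinarith
  exact HasDerivAt.rpow_mul_rpow_div_rpow_of_logDeriv _ _ _ (hY₄' χ)
    hS_logDeriv.one_sub_sq_of_logDeriv hS_logDeriv (hY₄pos χ).ne' h_one_sub_sq_pos.ne' hS_pos

theorem G_monotone (γ : ℝ) (h1 : 1 < γ) (h2 : γ < 3/2)
    (Y₁ Y₂ S : ℝ → ℝ)
    (hY₁ : ∀ χ, HasDerivAt Y₁ (F₁ γ (Y₁ χ) (Y₂ χ) (S χ)) χ)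
    (hY₂ : ∀ χ, HasDerivAt Y₂ (F₂ γ (Y₁ χ) (Y₂ χ) (S χ)) χ)
    (hS : ∀ χ, HasDerivAt S (F₃ γ (Y₁ χ) (Y₂ χ) (S χ)) χ)
    (hY₄' : ∀ χ, HasDerivAt (fun χ => Y₄fun γ (Y₁ χ) (Y₂ χ))
      (2 * ((5*γ-6) * Y₂ χ + 4*(γ-1)*(7*γ-10) * Y₁ χ
        - (4*(γ-1)/(2-γ)) * (1 - (S χ)^2) * L γ (Y₁ χ) (Y₂ χ))
        * Y₄fun γ (Y₁ χ) (Y₂ χ)) χ)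
    (hY₄pos : ∀ χ, 0 < Y₄fun γ (Y₁ χ) (Y₂ χ))
    (hSrange : ∀ χ, 0 < S χ ∧ S χ < 1) :
    ∀ χ, HasDerivAt
      (fun χ => (Y₄fun γ (Y₁ χ) (Y₂ χ)) ^ ((81/40) * (-15*γ^2 + 36*γ - 20) : ℝ)
        * (1 - (S χ)^2) ^ ((81/40) * (2-γ) * (10-7*γ) : ℝ)
        / (S χ) ^ ((81/5) * γ * (3-2*γ) : ℝ))
      (-(81/20) * (10-9*γ) * (2-γ)^2 * Y₂ χ *
        ((Y₄fun γ (Y₁ χ) (Y₂ χ)) ^ ((81/40) * (-15*γ^2 + 36*γ - 20) : ℝ)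
          * (1 - (S χ)^2) ^ ((81/40) * (2-γ) * (10-7*γ) : ℝ)
          / (S χ) ^ ((81/5) * γ * (3-2*γ) : ℝ))) χ :=
  G_monotone_general γ h2 Y₁ Y₂ S hS hY₄' hY₄pos hSrange
end

section
/- When γ = 10/9, along any solution of the ODE system with Y₄ > 0 and 0 < S < 1, the quantity Y₄³(1-S²)⁴/S¹⁴ is constant (a first integral of the system). -/
/-
At γ = 10/9 the functions Y₄, 1 - S² and S along a solution all have logarithmic derivatives
proportional to L:  Y₄'/Y₄ = -(7 - 3S²)L/3,  (1 - S²)'/(1 - S²) = S²L,  S'/S = -(1 - S²)L/2.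
The combination 3·(first) + 4·(second) - 14·(third) vanishes identically, so the derivative of
Y₄³(1 - S²)⁴/S¹⁴ is zero.
-/

section LogDeriv

variable {u v : ℝ → ℝ} {a b x : ℝ}

theorem HasDerivAt.pow_of_eq_mul_self (hu : HasDerivAt u (a * u x) x) (m : ℕ) :
    HasDerivAt (fun t => u t ^ m) (m * a * u x ^ m) x := by
  rcases m with _ | k
  · simpa using hasDerivAt_const x (1 : ℝ)
  · refine (hu.pow (k + 1)).congr_deriv ?_
    push_cast
    ring

theorem HasDerivAt.mul_of_eq_mul_self (hu : HasDerivAt u (a * u x) x)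
    (hv : HasDerivAt v (b * v x) x) :
    HasDerivAt (fun t => u t * v t) ((a + b) * (u x * v x)) x := by
  refine (hu.mul hv).congr_deriv ?_
  ring

theorem HasDerivAt.div_of_eq_mul_self (hu : HasDerivAt u (a * u x) x)
    (hv : HasDerivAt v (b * v x) x) (hvx : v x ≠ 0) :
    HasDerivAt (fun t => u t / v t) ((a - b) * (u x / v x)) x := by
  refine (hu.div hv hvx).congr_deriv ?_
  field_simp

end LogDeriv

theorem HasDerivAt.Y₄fun {Y₁ Y₂ : ℝ → ℝ} {y₁ y₂ x : ℝ} (γ : ℝ)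
    (h₁ : HasDerivAt Y₁ y₁ x) (h₂ : HasDerivAt Y₂ y₂ x) :
    HasDerivAt (fun t => Y₄fun γ (Y₁ t) (Y₂ t))
      (-(3 / (16 * (γ - 1))) * (32 * (3 - 2 * γ) * (γ - 1) * Y₁ x * y₁ + 2 * Y₂ x * y₂)) x := by
  refine ((((h₁.pow 2).const_sub 1).const_mul (16 * (3 - 2 * γ) * (γ - 1))
    |>.sub (h₂.pow 2)).const_mul (3 / (16 * (γ - 1)))).congr_deriv ?_
  push_cast
  ring

theorem Y₄fun_lieDeriv_ten_ninths (Y₁ Y₂ S : ℝ) :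
    -(3 / (16 * ((10/9 : ℝ) - 1)))
        * (32 * (3 - 2 * (10/9)) * ((10/9 : ℝ) - 1) * Y₁ * F₁ (10/9) Y₁ Y₂ S
          + 2 * Y₂ * F₂ (10/9) Y₁ Y₂ S)
      = -(7 - 3 * S ^ 2) * L (10/9) Y₁ Y₂ / 3 * Y₄fun (10/9) Y₁ Y₂ := by
  simp only [F₁, F₂, L, Y₄fun]
  ring

theorem F₃_ten_ninths (Y₁ Y₂ S : ℝ) :
    F₃ (10/9) Y₁ Y₂ S = -(1 - S ^ 2) * L (10/9) Y₁ Y₂ / 2 * S := by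
  simp only [F₃]
  ring

theorem first_integral_gamma_ten_ninths_general
    (Y₁ Y₂ S : ℝ → ℝ)
    (hY₁ : ∀ χ, HasDerivAt Y₁ (F₁ (10/9) (Y₁ χ) (Y₂ χ) (S χ)) χ)
    (hY₂ : ∀ χ, HasDerivAt Y₂ (F₂ (10/9) (Y₁ χ) (Y₂ χ) (S χ)) χ)
    (hS : ∀ χ, HasDerivAt S (F₃ (10/9) (Y₁ χ) (Y₂ χ) (S χ)) χ)
    (hSrange : ∀ χ, 0 < S χ ∧ S χ < 1) :
    ∀ χ₁ χ₂ : ℝ,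
      (Y₄fun (10/9) (Y₁ χ₁) (Y₂ χ₁))^3 * (1 - (S χ₁)^2)^4 / (S χ₁)^14 =
      (Y₄fun (10/9) (Y₁ χ₂) (Y₂ χ₂))^3 * (1 - (S χ₂)^2)^4 / (S χ₂)^14 := by
  have hconst : ∀ χ, HasDerivAt
      (fun t => Y₄fun (10/9) (Y₁ t) (Y₂ t) ^ 3 * (1 - S t ^ 2) ^ 4 / S t ^ 14) 0 χ := by
    intro χ
    have hY₄ := (HasDerivAt.Y₄fun (10/9) (hY₁ χ) (hY₂ χ)).congr_deriv
      (Y₄fun_lieDeriv_ten_ninths _ _ (S χ))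
    have hS' := (hS χ).congr_deriv (F₃_ten_ninths _ _ _)
    have hS₂ : HasDerivAt (fun t => 1 - S t ^ 2)
        (S χ ^ 2 * L (10/9) (Y₁ χ) (Y₂ χ) * (1 - S χ ^ 2)) χ :=
      (((hS χ).pow 2).const_sub 1).congr_deriv (by rw [F₃_ten_ninths]; ring)
    refine (((hY₄.pow_of_eq_mul_self 3).mul_of_eq_mul_self (hS₂.pow_of_eq_mul_self 4))
      |>.div_of_eq_mul_self (hS'.pow_of_eq_mul_self 14) (pow_ne_zero _ (hSrange χ).1.ne')
      ).congr_deriv ?_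
    push_cast
    ring
  exact is_const_of_deriv_eq_zero (fun χ => (hconst χ).differentiableAt) (fun χ => (hconst χ).deriv)

theorem first_integral_gamma_ten_ninths
    (Y₁ Y₂ S : ℝ → ℝ)
    (hY₁ : ∀ χ, HasDerivAt Y₁ (F₁ (10/9) (Y₁ χ) (Y₂ χ) (S χ)) χ)
    (hY₂ : ∀ χ, HasDerivAt Y₂ (F₂ (10/9) (Y₁ χ) (Y₂ χ) (S χ)) χ)
    (hS : ∀ χ, HasDerivAt S (F₃ (10/9) (Y₁ χ) (Y₂ χ) (S χ)) χ)
    (hY₄pos : ∀ χ, 0 < Y₄fun (10/9) (Y₁ χ) (Y₂ χ))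
    (hSrange : ∀ χ, 0 < S χ ∧ S χ < 1) :
    ∀ χ₁ χ₂ : ℝ,
      (Y₄fun (10/9) (Y₁ χ₁) (Y₂ χ₁))^3 * (1 - (S χ₁)^2)^4 / (S χ₁)^14 =
      (Y₄fun (10/9) (Y₁ χ₂) (Y₂ χ₂))^3 * (1 - (S χ₂)^2)^4 / (S χ₂)^14 :=
  first_integral_gamma_ten_ninths_general Y₁ Y₂ S hY₁ hY₂ hS hSrange
end

section
/- When γ = 10/9, every point (Y₁, Y₂, S) with Y₂ = -(20/9)Y₁, S² = 7/3 - 8Y₁², and 1/6 ≤ Y₁² ≤ 7/32 is an equilibrium point of the ODE system, and at every such point Y₄ = 7/3 - (32/3)Y₁² where Y₄ = (3/(16(γ-1)))[16(3-2γ)(γ-1)(1-Y₁²) - Y₂²]. -/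
theorem L_ten_ninths_eq_zero (Y₁ : ℝ) : L (10/9) Y₁ (-(20/9) * Y₁) = 0 := by
  unfold L; ring

theorem F₃_eq_zero_of_L_eq_zero {γ Y₁ Y₂ : ℝ} (S : ℝ) (hL : L γ Y₁ Y₂ = 0) :
    F₃ γ Y₁ Y₂ S = 0 := by
  unfold F₃; rw [hL, mul_zero]

theorem F₁_ten_ninths_eq_zero {Y₁ S : ℝ} (hS : S^2 = 7/3 - 8 * Y₁^2) :
    F₁ (10/9) Y₁ (-(20/9) * Y₁) S = 0 := by
  unfold F₁; rw [L_ten_ninths_eq_zero, hS]; ring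

theorem F₂_ten_ninths_eq_zero {Y₁ S : ℝ} (hS : S^2 = 7/3 - 8 * Y₁^2) :
    F₂ (10/9) Y₁ (-(20/9) * Y₁) S = 0 := by
  unfold F₂; rw [L_ten_ninths_eq_zero, hS]; ring

theorem Y₄fun_ten_ninths (Y₁ : ℝ) : Y₄fun (10/9) Y₁ (-(20/9) * Y₁) = 7/3 - (32/3) * Y₁^2 := by
  unfold Y₄fun; ring

theorem Wainwright_equilibria_general
    (Y₁ Y₂ S : ℝ)
    (hY₂ : Y₂ = -(20/9) * Y₁)
    (hS : S^2 = 7/3 - 8 * Y₁^2) :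
    F₁ (10/9) Y₁ Y₂ S = 0 ∧ F₂ (10/9) Y₁ Y₂ S = 0 ∧ F₃ (10/9) Y₁ Y₂ S = 0 ∧
      Y₄fun (10/9) Y₁ Y₂ = 7/3 - (32/3) * Y₁^2 := by
  subst hY₂
  exact ⟨F₁_ten_ninths_eq_zero hS, F₂_ten_ninths_eq_zero hS,
    F₃_eq_zero_of_L_eq_zero S (L_ten_ninths_eq_zero Y₁), Y₄fun_ten_ninths Y₁⟩

theorem Wainwright_equilibria
    (Y₁ Y₂ S : ℝ)
    (hY₂ : Y₂ = -(20/9) * Y₁)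
    (hS : S^2 = 7/3 - 8 * Y₁^2)
    (hlo : 1/6 ≤ Y₁^2) (hhi : Y₁^2 ≤ 7/32) :
    F₁ (10/9) Y₁ Y₂ S = 0 ∧ F₂ (10/9) Y₁ Y₂ S = 0 ∧ F₃ (10/9) Y₁ Y₂ S = 0 ∧
      Y₄fun (10/9) Y₁ Y₂ = 7/3 - (32/3) * Y₁^2 :=
  Wainwright_equilibria_general Y₁ Y₂ S hY₂ hS
end

section
/- For 1 < γ < 3/2, the Collins equilibrium point with S = 1, Y₁² = (6-5γ)²/((3γ-2)(2-γ)), Y₂ = -4(10-7γ)(γ-1)Y₁/(6-5γ) has scaled energy density Y₄ = 3(10-7γ)(γ-1)/(3γ-2), where Y₄ is defined by (16(γ-1)/3)Y₄ = 16(3-2γ)(γ-1)(1-Y₁²) - Y₂²; in particular Y₄ > 0 if and only if γ < 10/7. -/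
/-!
Everything reduces to two polynomial identities. First
`(3γ-2)(2-γ) - (6-5γ)² = 4(10-7γ)(γ-1)`, so `1 - Y₁² = 4(10-7γ)(γ-1)/((3γ-2)(2-γ))`, while
`Y₂² = 16(10-7γ)²(γ-1)²/((3γ-2)(2-γ))`. Hence the right-hand side defining `Y₄` is
`16(10-7γ)(γ-1)²(4(3-2γ) - (10-7γ))/((3γ-2)(2-γ))`, and `4(3-2γ) - (10-7γ) = 2-γ` cancels the
factor `2-γ`. For `γ > 1` the sign of `Y₄` is then the sign of `10-7γ`.
-/

namespace Collins

variable {γ Y₁ Y₂ Y₄ : ℝ}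

lemma one_sub_Y₁_sq (hD : (3*γ-2) * (2-γ) ≠ 0)
    (hY₁ : Y₁^2 = (6-5*γ)^2 / ((3*γ-2) * (2-γ))) :
    1 - Y₁^2 = 4*(10-7*γ)*(γ-1) / ((3*γ-2) * (2-γ)) := by
  rw [hY₁, eq_div_iff hD, sub_mul, div_mul_cancel₀ _ hD]
  ring

lemma Y₂_sq (hc : 6-5*γ ≠ 0) (hY₁ : Y₁^2 = (6-5*γ)^2 / ((3*γ-2) * (2-γ)))
    (hY₂ : Y₂ = -4 * (10-7*γ) * (γ-1) * Y₁ / (6-5*γ)) :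
    Y₂^2 = 16*(10-7*γ)^2*(γ-1)^2 / ((3*γ-2) * (2-γ)) := by
  have hY₁_div : Y₁^2 / (6-5*γ)^2 = 1 / ((3*γ-2) * (2-γ)) := by
    rw [hY₁, div_div_cancel_left' (pow_ne_zero 2 hc), one_div]
  calc Y₂^2 = 16*(10-7*γ)^2*(γ-1)^2 * (Y₁^2 / (6-5*γ)^2) := by
        rw [hY₂, div_pow, mul_div_assoc']; ring
    _ = 16*(10-7*γ)^2*(γ-1)^2 / ((3*γ-2) * (2-γ)) := by rw [hY₁_div, mul_one_div]

lemma Y₄_eq (hγ : γ ≠ 1) (ha : 3*γ-2 ≠ 0) (hb : 2-γ ≠ 0) (hc : 6-5*γ ≠ 0)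
    (hY₁ : Y₁^2 = (6-5*γ)^2 / ((3*γ-2) * (2-γ)))
    (hY₂ : Y₂ = -4 * (10-7*γ) * (γ-1) * Y₁ / (6-5*γ))
    (hY₄ : (16*(γ-1)/3) * Y₄ = 16*(3-2*γ)*(γ-1)*(1 - Y₁^2) - Y₂^2) :
    Y₄ = 3*(10-7*γ)*(γ-1)/(3*γ-2) := by
  have hD : (3*γ-2) * (2-γ) ≠ 0 := mul_ne_zero ha hb
  rw [one_sub_Y₁_sq hD hY₁, Y₂_sq hc hY₁ hY₂, mul_div_assoc', div_sub_div_same,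
    eq_div_iff hD] at hY₄
  rw [eq_div_iff ha]
  apply mul_left_cancel₀ (mul_ne_zero (sub_ne_zero.mpr hγ) hb)
  linear_combination (3/16) * hY₄

lemma Y₄_pos_iff (hγ : 1 < γ) : 0 < 3*(10-7*γ)*(γ-1)/(3*γ-2) ↔ γ < 10/7 := by
  have hγ1 : 0 < γ - 1 := by linarith
  rw [div_pos_iff_of_pos_right (by linarith), mul_pos_iff_of_pos_right hγ1]
  constructor <;> intro h <;> linarith

end Collins

theorem Collins_energy_density (γ : ℝ) (h1 : 1 < γ) (h2 : γ < 3/2)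
    (h3 : γ ≠ 6/5) (Y₁ Y₂ Y₄ : ℝ)
    (hY₁ : Y₁^2 = (6-5*γ)^2 / ((3*γ-2) * (2-γ)))
    (hY₂ : Y₂ = -4 * (10-7*γ) * (γ-1) * Y₁ / (6-5*γ))
    (hY₄ : (16*(γ-1)/3) * Y₄ = 16*(3-2*γ)*(γ-1)*(1 - Y₁^2) - Y₂^2) :
    Y₄ = 3*(10-7*γ)*(γ-1)/(3*γ-2) ∧ (0 < Y₄ ↔ γ < 10/7) := by
  have hY₄_eq : Y₄ = 3*(10-7*γ)*(γ-1)/(3*γ-2) :=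
    Collins.Y₄_eq h1.ne' (by linarith) (by linarith) (fun h => h3 (by linarith)) hY₁ hY₂ hY₄
  exact ⟨hY₄_eq, hY₄_eq ▸ Collins.Y₄_pos_iff h1⟩
end
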